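/- arXiv:0803.2486 — 3 statements merged into one kernel-verified Lean document; each statement's English description precedes it below -/
import Mathlib

section
/- Let 0 < ν < 1 and let S_{k,ℓ} = S_k^{(ν)} + S_ℓ^{(1−ν)} be the sum of independent binomial random variables with parameters (k, ν) and (ℓ, 1−ν). Then there exists a universal constant D > 0 such that for all integers k, ℓ > 1 and all 0 ≤ i ≤ k+ℓ, P(S_{k,ℓ} = i) ≤ D/(ν(1−ν)(k+ℓ)^{1/2}). -/
/-- Probability that a binomial random variable with parameters `(n, p)` equals `j`. -/
noncomputable def binomPMF (n : ℕ) (p : ℝ) (j : ℕ) : ℝ :=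
  (n.choose j : ℝ) * p ^ j * (1 - p) ^ (n - j)

/-- Probability that the sum `S_{k,ℓ} = S_k^{(ν)} + S_ℓ^{(1−ν)}` of two independent
binomial random variables with parameters `(k, ν)` and `(ℓ, 1−ν)` equals `i`. -/
noncomputable def sumBinomPMF (k ℓ : ℕ) (ν : ℝ) (i : ℕ) : ℝ :=
  ∑ u ∈ Finset.range (i + 1), binomPMF k ν u * binomPMF ℓ (1 - ν) (i - u)

/-!
Bound each term of the convolution by the largest point mass of the binomial with more trials;
the masses of the other factor sum to at most `1`. A binomial `(n, p)` distribution peaks at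
`m = ⌊(n + 1) p⌋`. There `p ^ m (1 - p) ^ (n - m) ≤ (m / n) ^ m ((n - m) / n) ^ (n - m)` (Gibbs'
inequality), and Stirling's two-sided bound `√π ≤ n! / (√(2n) (n / e) ^ n) ≤ e / √2` gives
`choose n m (m / n) ^ m ((n - m) / n) ^ (n - m) ≤ √(n / (m (n - m)))`, which is at most
`2 / √(n p (1 - p))` because `m` and `n - m` are at least half of `n p` and `n (1 - p)`. If
`m = 0` or `m = n`, then `n p (1 - p) ≤ 1` and the trivial bound `1` suffices.
-/

open Finset Real Stirling

theorem sum_range_succ_mul_sub_comm (f g : ℕ → ℝ) (i : ℕ) :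
    ∑ u ∈ range (i + 1), f u * g (i - u) = ∑ u ∈ range (i + 1), g u * f (i - u) := by
  rw [← sum_range_reflect]
  refine sum_congr rfl fun u hu => ?_
  rw [mem_range] at hu
  rw [add_tsub_cancel_right, Nat.sub_sub_self (by omega), mul_comm]

theorem sum_range_succ_mul_sub_le {f g : ℕ → ℝ} {M : ℝ} (i : ℕ) (hf : ∀ u, f u ≤ M) (hM : 0 ≤ M)
    (hg : ∀ v, 0 ≤ g v) (hg_sum : ∑ v ∈ range (i + 1), g v ≤ 1) :
    ∑ u ∈ range (i + 1), f u * g (i - u) ≤ M :=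
  calc ∑ u ∈ range (i + 1), f u * g (i - u)
      ≤ ∑ u ∈ range (i + 1), M * g (i - u) :=
        sum_le_sum fun u _ => mul_le_mul_of_nonneg_right (hf u) (hg _)
    _ = M * ∑ v ∈ range (i + 1), g v := by
        rw [sum_range_succ_mul_sub_comm (fun _ => M), mul_comm, sum_mul]
    _ ≤ M := mul_le_of_le_one_right hM hg_sum

theorem pow_mul_one_sub_pow_le {p : ℝ} {j m : ℕ} (hp0 : 0 < p) (hp1 : p < 1) (hj : j ≠ 0)
    (hm : m ≠ 0) :
    p ^ j * (1 - p) ^ m ≤ (j / (j + m) : ℝ) ^ j * (m / (j + m) : ℝ) ^ m := by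
  have hjr : (0 : ℝ) < j := by positivity
  have hmr : (0 : ℝ) < m := by positivity
  have hq : 0 < 1 - p := sub_pos.2 hp1
  have hx : 0 < (j / (j + m) : ℝ) := by positivity
  have hy : 0 < (m / (j + m) : ℝ) := by positivity
  rw [← log_le_log_iff (by positivity) (by positivity), log_mul (by positivity) (by positivity),
    log_mul (by positivity) (by positivity), log_pow, log_pow, log_pow, log_pow]
  have h₁ := log_le_sub_one_of_pos (div_pos hp0 hx)
  have h₂ := log_le_sub_one_of_pos (div_pos hq hy)
  rw [log_div hp0.ne' hx.ne'] at h₁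
  rw [log_div hq.ne' hy.ne'] at h₂
  have e₁ : (j : ℝ) * (p / (j / (j + m)) - 1) = p * (j + m) - j := by field_simp
  have e₂ : (m : ℝ) * ((1 - p) / (m / (j + m)) - 1) = (1 - p) * (j + m) - m := by field_simp
  nlinarith [mul_le_mul_of_nonneg_left h₁ hjr.le, mul_le_mul_of_nonneg_left h₂ hmr.le]

theorem stirlingSeq_le_exp_one_div_sqrt_two {n : ℕ} (hn : n ≠ 0) :
    stirlingSeq n ≤ exp 1 / √2 := by
  obtain ⟨k, rfl⟩ := Nat.exists_eq_succ_of_ne_zero hn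
  exact stirlingSeq_one ▸ stirlingSeq'_antitone (Nat.zero_le k)

theorem choose_mul_pow_mul_pow_eq {j m : ℕ} (hj : j ≠ 0) (hm : m ≠ 0) :
    ((j + m).choose j : ℝ) * ((j / (j + m) : ℝ) ^ j * (m / (j + m) : ℝ) ^ m) =
      stirlingSeq (j + m) / (stirlingSeq j * stirlingSeq m) *
        (√(2 * (j + m)) / (√(2 * j) * √(2 * m))) := by
  simp only [stirlingSeq, Nat.cast_add_choose, Nat.cast_add]
  rw [div_pow, div_pow, div_pow, div_pow, div_pow, pow_add, pow_add (exp 1)]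
  field_simp

theorem choose_mul_pow_mul_pow_le {j m : ℕ} (hj : j ≠ 0) (hm : m ≠ 0) :
    ((j + m).choose j : ℝ) * ((j / (j + m) : ℝ) ^ j * (m / (j + m) : ℝ) ^ m) ≤
      √((j + m) / (j * m)) := by
  have hπ := sqrt_pi_le_stirlingSeq hj
  have hπ' := sqrt_pi_le_stirlingSeq hm
  have hstirling : stirlingSeq (j + m) / (stirlingSeq j * stirlingSeq m)
      ≤ exp 1 / √2 / π := by
    rw [← mul_self_sqrt pi_pos.le]
    exact div_le_div₀ (by positivity) (stirlingSeq_le_exp_one_div_sqrt_two (by omega))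
      (by positivity) (mul_le_mul hπ hπ' (by positivity) (hπ.trans' (by positivity)))
  have hsqrt : √(2 * (j + m)) / (√(2 * j) * √(2 * m)) = √((j + m) / (j * m)) / √2 := by
    rw [sqrt_mul, sqrt_mul, sqrt_mul, sqrt_div, sqrt_mul] <;> try positivity
    field_simp
  have he : exp 1 / (2 * π) ≤ 1 := by
    rw [div_le_one (by positivity)]
    linarith [exp_one_lt_d9, pi_gt_three]
  rw [choose_mul_pow_mul_pow_eq hj hm, hsqrt]
  calc _ ≤ exp 1 / √2 / π * (√((j + m) / (j * m)) / √2) := by gcongr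
    _ = exp 1 / (2 * π) * √((j + m) / (j * m)) := by
        field_simp
        rw [sq_sqrt zero_le_two]
    _ ≤ √((j + m) / (j * m)) := mul_le_of_le_one_left (sqrt_nonneg _) he

section Binomial

theorem sum_range_binomPMF_eq_one (p : ℝ) {n N : ℕ} (hN : n ≤ N) :
    ∑ j ∈ range (N + 1), binomPMF n p j = 1 := by
  rw [← sum_subset (range_subset_range.2 (Nat.succ_le_succ hN)) fun j _ hj => ?_]
  · simpa [binomPMF, mul_assoc, mul_comm, mul_left_comm] using (add_pow p (1 - p) n).symm
  · simp [binomPMF, Nat.choose_eq_zero_of_lt (by simpa using hj : n < j)]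

variable {p : ℝ}

theorem binomPMF_nonneg (hp0 : 0 ≤ p) (hp1 : p ≤ 1) (n j : ℕ) : 0 ≤ binomPMF n p j := by
  have : 0 ≤ 1 - p := sub_nonneg.2 hp1
  unfold binomPMF; positivity

theorem sum_range_binomPMF_le_one (hp0 : 0 ≤ p) (hp1 : p ≤ 1) (n N : ℕ) :
    ∑ j ∈ range (N + 1), binomPMF n p j ≤ 1 :=
  calc ∑ j ∈ range (N + 1), binomPMF n p j ≤ ∑ j ∈ range (N + n + 1), binomPMF n p j :=
        sum_le_sum_of_subset_of_nonneg (range_subset_range.2 (by omega))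
          fun j _ _ => binomPMF_nonneg hp0 hp1 n j
    _ = 1 := sum_range_binomPMF_eq_one p (by omega)

theorem binomPMF_le_one (hp0 : 0 ≤ p) (hp1 : p ≤ 1) (n j : ℕ) : binomPMF n p j ≤ 1 :=
  (single_le_sum (fun v _ => binomPMF_nonneg hp0 hp1 n v) (self_mem_range_succ j)).trans
    (sum_range_binomPMF_le_one hp0 hp1 n j)

theorem binomPMF_succ_mul {n j : ℕ} (hj : j < n) :
    binomPMF n p (j + 1) * ((j + 1) * (1 - p)) = binomPMF n p j * ((n - j) * p) := by
  have hc : (n.choose (j + 1) : ℝ) * (j + 1) = n.choose j * (n - j) := by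
    have := congrArg (Nat.cast : ℕ → ℝ) (Nat.choose_succ_right_eq n j)
    push_cast [Nat.cast_sub hj.le] at this
    exact this
  unfold binomPMF
  rw [show n - j = n - (j + 1) + 1 by omega, pow_succ (1 - p)]
  linear_combination (p ^ (j + 1) * (1 - p) ^ (n - (j + 1)) * (1 - p)) * hc

theorem binomPMF_le_succ {n j : ℕ} (hp0 : 0 ≤ p) (hp1 : p < 1)
    (hj : (j + 1 : ℝ) ≤ (n + 1) * p) : binomPMF n p j ≤ binomPMF n p (j + 1) := by
  have hjn : j < n := by exact_mod_cast (show (j : ℝ) < n by nlinarith)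
  have hc : 0 < ((j : ℝ) + 1) * (1 - p) := by nlinarith
  refine le_of_mul_le_mul_right ?_ hc
  rw [binomPMF_succ_mul hjn]
  exact mul_le_mul_of_nonneg_left (by nlinarith) (binomPMF_nonneg hp0 hp1.le n j)

theorem binomPMF_succ_le {n j : ℕ} (hp0 : 0 ≤ p) (hp1 : p < 1)
    (hj : (n + 1) * p ≤ j + 1) : binomPMF n p (j + 1) ≤ binomPMF n p j := by
  rcases lt_or_ge j n with hjn | hnj
  · have hc : 0 < ((j : ℝ) + 1) * (1 - p) := by nlinarith
    refine le_of_mul_le_mul_right ?_ hc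
    rw [binomPMF_succ_mul hjn]
    exact mul_le_mul_of_nonneg_left (by nlinarith) (binomPMF_nonneg hp0 hp1.le n j)
  · simpa [binomPMF, Nat.choose_eq_zero_of_lt (Nat.lt_succ_of_le hnj)]
      using binomPMF_nonneg hp0 hp1.le n j

theorem binomPMF_le_binomPMF_floor (hp0 : 0 ≤ p) (hp1 : p < 1) (n j : ℕ) :
    binomPMF n p j ≤ binomPMF n p ⌊((n : ℝ) + 1) * p⌋₊ := by
  set m := ⌊((n : ℝ) + 1) * p⌋₊
  have hm : 0 ≤ ((n : ℝ) + 1) * p := by positivity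
  rcases le_total j m with hjm | hmj
  · refine monotoneOn_of_le_succ Set.ordConnected_Iic (fun a _ _ ha => ?_) hjm le_rfl hjm
    rw [Order.succ_eq_add_one] at ha ⊢
    exact binomPMF_le_succ hp0 hp1 (by exact_mod_cast (Nat.le_floor_iff hm).1 ha)
  · refine antitoneOn_nat_Ici_of_succ_le (fun a ha => ?_) (le_refl m) hmj hmj
    have : (m : ℝ) ≤ a := by exact_mod_cast ha
    exact binomPMF_succ_le hp0 hp1 (by linarith [Nat.lt_floor_add_one (((n : ℝ) + 1) * p)])

theorem binomPMF_add_le_sqrt (hp0 : 0 < p) (hp1 : p < 1) {j m : ℕ} (hj : j ≠ 0) (hm : m ≠ 0) :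
    binomPMF (j + m) p j ≤ √((j + m) / (j * m)) := by
  rw [binomPMF, add_tsub_cancel_left, mul_assoc]
  calc _ ≤ ((j + m).choose j : ℝ) * ((j / (j + m) : ℝ) ^ j * (m / (j + m) : ℝ) ^ m) :=
        mul_le_mul_of_nonneg_left (pow_mul_one_sub_pow_le hp0 hp1 hj hm) (by positivity)
    _ ≤ _ := choose_mul_pow_mul_pow_le hj hm

theorem binomPMF_le_two_div_sqrt (hp0 : 0 < p) (hp1 : p < 1) {n : ℕ} (hn : n ≠ 0) (j : ℕ) :
    binomPMF n p j ≤ 2 / √(n * (p * (1 - p))) := by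
  set m := ⌊((n : ℝ) + 1) * p⌋₊
  have hfloor : (m : ℝ) ≤ (n + 1) * p := Nat.floor_le (by positivity)
  have hfloor' : (n + 1) * p < m + 1 := Nat.lt_floor_add_one _
  have hσ : 0 < n * (p * (1 - p)) := by have := sub_pos.2 hp1; positivity
  have hmn : m ≤ n := Nat.lt_succ_iff.1 (by exact_mod_cast (show (m : ℝ) < n + 1 by nlinarith))
  refine (binomPMF_le_binomPMF_floor hp0.le hp1 n j).trans ?_
  by_cases hdeg : m = 0 ∨ m = n
  · have hσ1 : n * (p * (1 - p)) ≤ 1 := by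
      rcases hdeg with h | h <;> rw [h] at hfloor hfloor' <;> push_cast at hfloor hfloor' <;>
        nlinarith
    refine (binomPMF_le_one hp0.le hp1.le n m).trans ?_
    rw [le_div_iff₀ (sqrt_pos.2 hσ)]
    linarith [sqrt_le_one.2 hσ1]
  · obtain ⟨hm0, hmn'⟩ := not_or.1 hdeg
    have hmr : (1 : ℝ) ≤ m := by exact_mod_cast Nat.one_le_iff_ne_zero.2 hm0
    have hnmr : (1 : ℝ) ≤ n - m := by
      have : m + 1 ≤ n := by omega
      have : ((m + 1 : ℕ) : ℝ) ≤ n := by exact_mod_cast this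
      push_cast at this; linarith
    have hmode :=
      binomPMF_add_le_sqrt hp0 hp1 hm0 (Nat.sub_ne_zero_of_lt (lt_of_le_of_ne hmn hmn'))
    rw [Nat.add_sub_cancel' hmn, Nat.cast_sub hmn, add_sub_cancel] at hmode
    refine hmode.trans ?_
    rw [show (2 : ℝ) = √4 by rw [show (4 : ℝ) = 2 ^ 2 by norm_num, sqrt_sq zero_le_two],
      ← sqrt_div' _ hσ.le]
    refine sqrt_le_sqrt ?_
    rw [div_le_div_iff₀ (by positivity) hσ]
    nlinarith [mul_le_mul (show n * p ≤ 2 * m by nlinarith)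
      (show n * (1 - p) ≤ 2 * (n - m) by nlinarith) (by nlinarith) (by positivity)]

end Binomial

theorem two_div_sqrt_mul_le {n N s : ℝ} (hs0 : 0 < s) (hs : s ≤ 1 / 4) (hN : 0 < N)
    (hNn : N ≤ 2 * n) : 2 / √(n * s) ≤ 2 / (s * √N) := by
  rw [show s * √N = √(s ^ 2 * N) by rw [sqrt_mul (sq_nonneg s), sqrt_sq hs0.le]]
  refine div_le_div_of_nonneg_left zero_le_two (by positivity) (sqrt_le_sqrt ?_)
  nlinarith [mul_le_mul_of_nonneg_left (show s * N ≤ n by nlinarith) hs0.le]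

theorem sumBinom_pointwise_bound :
    ∃ D > (0 : ℝ), ∀ ν : ℝ, 0 < ν → ν < 1 → ∀ k ℓ i : ℕ, 1 < k → 1 < ℓ →
      i ≤ k + ℓ →
      sumBinomPMF k ℓ ν i ≤ D / (ν * (1 - ν) * Real.sqrt (k + ℓ)) := by
  refine ⟨2, two_pos, fun ν hν0 hν1 k ℓ i hk hℓ _ => ?_⟩
  have hν0' : 0 < 1 - ν := sub_pos.2 hν1
  have hs0 : 0 < ν * (1 - ν) := mul_pos hν0 hν0'
  have hs : ν * (1 - ν) ≤ 1 / 4 := by nlinarith [sq_nonneg (2 * ν - 1)]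
  have hsum : (0 : ℝ) < k + ℓ := by positivity
  rcases le_total ℓ k with hℓk | hkℓ
  · refine (sum_range_succ_mul_sub_le i (binomPMF_le_two_div_sqrt hν0 hν1 (by omega))
      (by positivity) (binomPMF_nonneg hν0'.le (by linarith) ℓ)
      (sum_range_binomPMF_le_one hν0'.le (by linarith) ℓ i)).trans ?_
    exact two_div_sqrt_mul_le hs0 hs hsum (by exact_mod_cast (by omega : k + ℓ ≤ 2 * k))
  · have hb := binomPMF_le_two_div_sqrt hν0' (by linarith : 1 - ν < 1) (by omega : ℓ ≠ 0)
    rw [sub_sub_cancel, mul_comm (1 - ν)] at hb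
    rw [sumBinomPMF, sum_range_succ_mul_sub_comm]
    refine (sum_range_succ_mul_sub_le i hb (by positivity) (binomPMF_nonneg hν0.le hν1.le k)
      (sum_range_binomPMF_le_one hν0.le hν1.le k i)).trans ?_
    exact two_div_sqrt_mul_le hs0 hs hsum (by exact_mod_cast (by omega : k + ℓ ≤ 2 * ℓ))
end

section
/- Let 0 < ν < 1 and let S_{k,ℓ} = S_k^{(ν)} + S_ℓ^{(1−ν)} be the sum of independent binomial random variables with parameters (k, ν) and (ℓ, 1−ν). Then there exists a universal constant C > 0 such that for all integers k, ℓ > 1 and all 0 ≤ i ≤ k+ℓ−1, |P(S_{k,ℓ} = i+1) − P(S_{k,ℓ} = i)| ≤ C/(ν(1−ν)(k+ℓ)). -/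
/-! The difference `P(S = i + 1) - P(S = i)` is the coefficient of `z ^ (i + 1)` in `(1 - z) G(z)`,
where `G(z) = (1 - ν + ν z) ^ k (ν + (1 - ν) z) ^ ℓ` is the generating function of `S`. Extract that
coefficient by integrating over the unit circle `z = exp (t i)`, `|t| ≤ π`: there `|1 - z| ≤ |t|` and each
factor of `G` has modulus at most `exp (-ν (1 - ν) (1 - cos t)) ≤ exp (-2 ν (1 - ν) t² / π²)`. The
coefficient is therefore at most `(2π)⁻¹ ∫ |t| exp (-c t²) dt ≤ (2π c)⁻¹` with
`c = 2 ν (1 - ν) (k + ℓ) / π²`, which is the claim with `C = π / 4`. -/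

open Complex Polynomial intervalIntegral
open scoped Real

theorem coeff_C_add_C_mul_X_pow {R : Type*} [CommSemiring R] (a b : R) (n j : ℕ) :
    ((C a + C b * X) ^ n).coeff j = n.choose j * b ^ j * a ^ (n - j) := by
  rw [add_comm, add_pow, finsetSum_coeff]
  simp only [mul_pow, ← C_pow, ← C_eq_natCast, mul_right_comm _ (X ^ _), mul_assoc, ← C_mul,
    coeff_C_mul_X_pow]
  rw [Finset.sum_ite_eq]
  split_ifs with h
  · ring
  · rw [Nat.choose_eq_zero_of_lt (by simpa using h)]; simp

theorem coeff_one_sub_X_mul {R : Type*} [Ring R] (p : R[X]) (n : ℕ) :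
    ((1 - X) * p).coeff (n + 1) = p.coeff (n + 1) - p.coeff n := by
  rw [sub_mul, one_mul, coeff_sub, coeff_X_mul]

noncomputable def binomPGF (n : ℕ) (p : ℝ) : ℝ[X] := (C (1 - p) + C p * X) ^ n

theorem binomPMF_eq_coeff_binomPGF (n : ℕ) (p : ℝ) (j : ℕ) :
    binomPMF n p j = (binomPGF n p).coeff j := by
  rw [binomPGF, coeff_C_add_C_mul_X_pow, binomPMF]

theorem sumBinomPMF_eq_coeff_mul (k ℓ : ℕ) (ν : ℝ) (i : ℕ) :
    sumBinomPMF k ℓ ν i = (binomPGF k ν * binomPGF ℓ (1 - ν)).coeff i := by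
  rw [coeff_mul, Finset.Nat.sum_antidiagonal_eq_sum_range_succ_mk, sumBinomPMF]
  simp only [binomPMF_eq_coeff_binomPGF]

theorem integral_exp_int_mul_mul_I (m : ℤ) :
    ∫ t in (-π)..π, exp (m * t * I) = if m = 0 then 2 * π else 0 := by
  split_ifs with hm
  · simp [hm, two_mul]
  · have hm' : (m : ℝ) ≠ 0 := by exact_mod_cast hm
    have := integral_comp_mul_left (fun s : ℝ => exp (s * I)) hm' (a := -π) (b := π)
    simp only [mul_neg, integral_exp_mul_I_eq_sin, Real.sin_int_mul_pi] at this
    simpa [mul_assoc] using this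

theorem integral_eval_exp_mul_I_mul_exp_neg (p : ℂ[X]) (n : ℕ) :
    ∫ t in (-π)..π, p.eval (exp (t * I)) * exp (-(n * t * I)) = 2 * π * p.coeff n := by
  have hmonomial (j : ℕ) : ∫ t in (-π)..π, p.coeff j * exp (t * I) ^ j * exp (-(n * t * I)) =
      if n = j then 2 * π * p.coeff n else 0 := by
    have hexp (t : ℝ) : exp (t * I) ^ j * exp (-(n * t * I)) = exp (((j - n : ℤ) : ℂ) * t * I) := by
      rw [← exp_nat_mul, ← exp_add]; push_cast; ring_nf
    simp_rw [mul_assoc (p.coeff j), hexp, integral_const_mul]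
    rw [integral_exp_int_mul_mul_I]
    by_cases h : n = j
    · subst h; simp only [sub_self, if_true]; push_cast; ring
    · simp [sub_eq_zero, h, Ne.symm h]
  have hdeg : p.natDegree < p.natDegree + n + 1 := by omega
  simp_rw [eval_eq_sum_range' hdeg, Finset.sum_mul]
  rw [integral_finsetSum fun j _ => by apply Continuous.intervalIntegrable; fun_prop]
  simp only [hmonomial, Finset.sum_ite_eq, Finset.mem_range]
  rw [if_pos (by omega)]

theorem abs_coeff_le_integral_norm_aeval (p : ℝ[X]) (n : ℕ) :
    |p.coeff n| ≤ (2 * π)⁻¹ * ∫ t in (-π)..π, ‖aeval (exp (t * I)) p‖ := by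
  have hcoeff := integral_eval_exp_mul_I_mul_exp_neg (p.map (algebraMap ℝ ℂ)) n
  simp only [eval_map_algebraMap, coeff_map] at hcoeff
  rw [le_inv_mul_iff₀ (by positivity)]
  calc 2 * π * |p.coeff n| = ‖∫ t in (-π)..π, aeval (exp (t * I)) p * exp (-(n * t * I))‖ := by
        rw [hcoeff]; simp [abs_of_pos Real.pi_pos]
    _ ≤ ∫ t in (-π)..π, ‖aeval (exp (t * I)) p * exp (-(n * t * I))‖ :=
        norm_integral_le_integral_norm (by linarith [Real.pi_pos])
    _ = ∫ t in (-π)..π, ‖aeval (exp (t * I)) p‖ := by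
        simp [norm_exp]

theorem integral_abs_mul_exp_neg_mul_sq_le {c : ℝ} (hc : 0 < c) {a : ℝ} (ha : 0 ≤ a) :
    ∫ t in (-a)..a, |t| * Real.exp (-c * t ^ 2) ≤ c⁻¹ := by
  set g : ℝ → ℝ := fun t => |t| * Real.exp (-c * t ^ 2)
  have hg : Continuous g := by fun_prop
  have hprimitive (t : ℝ) : HasDerivAt (fun s => -Real.exp (-c * s ^ 2) / (2 * c))
      (t * Real.exp (-c * t ^ 2)) t := by
    have hquad : HasDerivAt (fun s => -c * s ^ 2) (-c * (2 * t)) t := by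
      simpa using (hasDerivAt_pow 2 t).const_mul (-c)
    exact (hquad.exp.neg.div_const (2 * c)).congr_deriv (by field_simp)
  have hhalf : ∫ t in (0)..a, g t = (1 - Real.exp (-c * a ^ 2)) / (2 * c) := by
    rw [integral_congr (g := fun t => t * Real.exp (-c * t ^ 2)) fun t ht => by
      rw [Set.uIcc_of_le ha] at ht; simp [g, abs_of_nonneg ht.1]]
    rw [integral_eq_sub_of_hasDerivAt (fun t _ => hprimitive t)
      (Continuous.intervalIntegrable (by fun_prop) _ _)]
    simp only [neg_mul, ne_eq, OfNat.ofNat_ne_zero, not_false_eq_true, zero_pow, mul_zero,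
      Real.exp_zero]
    ring
  have hsymm : ∫ t in (-a)..0, g t = ∫ t in (0)..a, g t := by
    simpa [g] using (integral_comp_neg (a := 0) (b := a) g).symm
  rw [← integral_add_adjacent_intervals (hg.intervalIntegrable _ 0) (hg.intervalIntegrable 0 _),
    hsymm, hhalf]
  have hsum : (1 - Real.exp (-c * a ^ 2)) / (2 * c) + (1 - Real.exp (-c * a ^ 2)) / (2 * c)
      = (1 - Real.exp (-c * a ^ 2)) * c⁻¹ := by
    field_simp
    ring
  rw [hsum]
  exact mul_le_of_le_one_left (inv_nonneg.2 hc.le) (by linarith [Real.exp_pos (-c * a ^ 2)])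

theorem norm_one_sub_add_mul_exp_mul_I_le (p t : ℝ) :
    ‖(1 - p : ℂ) + p * exp (t * I)‖ ≤ Real.exp (-(p * (1 - p) * (1 - Real.cos t))) := by
  have hz : (1 - p : ℂ) + p * exp (t * I)
      = ((1 - p + p * Real.cos t : ℝ) : ℂ) + ((p * Real.sin t : ℝ) : ℂ) * I := by
    rw [exp_mul_I]
    push_cast [← ofReal_cos, ← ofReal_sin]
    ring
  rw [hz, norm_add_mul_I]
  set x := p * (1 - p) * (1 - Real.cos t)
  have hsq : (1 - p + p * Real.cos t) ^ 2 + (p * Real.sin t) ^ 2 = 1 - 2 * x := by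
    linear_combination p ^ 2 * Real.sin_sq_add_cos_sq t
  calc √((1 - p + p * Real.cos t) ^ 2 + (p * Real.sin t) ^ 2)
      ≤ √(Real.exp (-x) ^ 2) := by
        rw [hsq, ← Real.exp_nat_mul]
        push_cast
        gcongr
        linarith [Real.add_one_le_exp (2 * -x)]
    _ = Real.exp (-x) := Real.sqrt_sq (Real.exp_pos _).le

theorem norm_aeval_binomPGF_le (n : ℕ) (p t : ℝ) :
    ‖aeval (exp (t * I)) (binomPGF n p)‖ ≤ Real.exp (-(n * (p * (1 - p) * (1 - Real.cos t)))) := by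
  rw [binomPGF, map_pow, norm_pow, ← mul_neg, Real.exp_nat_mul]
  gcongr
  simpa using norm_one_sub_add_mul_exp_mul_I_le p t

theorem norm_aeval_one_sub_X_mul_le {ν t : ℝ} (hν0 : 0 ≤ ν) (hν1 : ν ≤ 1) (ht : |t| ≤ π)
    (k ℓ : ℕ) :
    ‖aeval (exp (t * I)) ((1 - X) * (binomPGF k ν * binomPGF ℓ (1 - ν)))‖ ≤
      |t| * Real.exp (-(2 * (ν * (1 - ν) * (k + ℓ)) / π ^ 2) * t ^ 2) := by
  have hfactor : ‖1 - exp (t * I)‖ ≤ |t| := by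
    simpa [norm_sub_rev, mul_comm] using Real.norm_exp_I_mul_ofReal_sub_one_le (x := t)
  have hcos : 2 / π ^ 2 * t ^ 2 ≤ 1 - Real.cos t := by
    linarith [Real.cos_le_one_sub_mul_cos_sq ht]
  have hvar : 0 ≤ ν * (1 - ν) * (k + ℓ) := by
    have : 0 ≤ 1 - ν := by linarith
    positivity
  rw [map_mul, map_mul, norm_mul, norm_mul, map_sub, map_one, aeval_X]
  calc ‖1 - exp (t * I)‖ * (‖aeval (exp (t * I)) (binomPGF k ν)‖ *
        ‖aeval (exp (t * I)) (binomPGF ℓ (1 - ν))‖)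
      ≤ |t| * (Real.exp (-(k * (ν * (1 - ν) * (1 - Real.cos t)))) *
        Real.exp (-(ℓ * ((1 - ν) * (1 - (1 - ν)) * (1 - Real.cos t))))) := by
        gcongr
        · exact norm_aeval_binomPGF_le k ν t
        · exact norm_aeval_binomPGF_le ℓ (1 - ν) t
    _ = |t| * Real.exp (-(ν * (1 - ν) * (k + ℓ) * (1 - Real.cos t))) := by
        rw [← Real.exp_add]; ring_nf
    _ ≤ |t| * Real.exp (-(2 * (ν * (1 - ν) * (k + ℓ)) / π ^ 2) * t ^ 2) := by
        gcongr
        have hrearrange : 2 * (ν * (1 - ν) * (k + ℓ)) / π ^ 2 * t ^ 2 =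
            ν * (1 - ν) * (k + ℓ) * (2 / π ^ 2 * t ^ 2) := by ring
        rw [neg_mul, hrearrange, neg_le_neg_iff]
        exact mul_le_mul_of_nonneg_left hcos hvar

theorem sumBinom_difference_bound :
    ∃ C > (0 : ℝ), ∀ ν : ℝ, 0 < ν → ν < 1 → ∀ k ℓ i : ℕ, 1 < k → 1 < ℓ →
      i ≤ k + ℓ - 1 →
      |sumBinomPMF k ℓ ν (i + 1) - sumBinomPMF k ℓ ν i|
        ≤ C / (ν * (1 - ν) * (k + ℓ)) := by
  refine ⟨π / 4, by positivity, fun ν hν0 hν1 k ℓ i hk _ _ => ?_⟩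
  have hvar : 0 < ν * (1 - ν) * (k + ℓ) := by
    have : 0 < 1 - ν := by linarith
    positivity
  set c := 2 * (ν * (1 - ν) * (k + ℓ)) / π ^ 2
  have hc : 0 < c := by positivity
  rw [sumBinomPMF_eq_coeff_mul, sumBinomPMF_eq_coeff_mul, ← coeff_one_sub_X_mul]
  calc _ ≤ (2 * π)⁻¹ * ∫ t in (-π)..π, ‖aeval (exp (t * I))
          ((1 - X) * (binomPGF k ν * binomPGF ℓ (1 - ν)))‖ :=
        abs_coeff_le_integral_norm_aeval _ _
    _ ≤ (2 * π)⁻¹ * ∫ t in (-π)..π, |t| * Real.exp (-c * t ^ 2) := by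
        gcongr
        apply integral_mono_on (by linarith [Real.pi_pos])
        · exact Continuous.intervalIntegrable (by fun_prop) _ _
        · exact Continuous.intervalIntegrable (by fun_prop) _ _
        · exact fun t ht => norm_aeval_one_sub_X_mul_le hν0.le hν1.le (abs_le.2 ht) k ℓ
    _ ≤ (2 * π)⁻¹ * c⁻¹ := by
        gcongr
        exact integral_abs_mul_exp_neg_mul_sq_le hc Real.pi_pos.le
    _ = π / 4 / (ν * (1 - ν) * (k + ℓ)) := by
        simp only [c]
        field_simp
        ring
end

section
/- Let α, β ∈ ℝ with |α| + |β| < 1 and let {ε_{i,j}} be i.i.d. with mean 0 and variance 1. Then for each (k,ℓ) ∈ ℤ² the series X_{k,ℓ} = Σ_{(i,j): i ≤ k, j ≤ ℓ} C(k+ℓ−i−j, k−i) α^{k−i} β^{ℓ−j} ε_{i,j} converges in L², and X_{k,ℓ} satisfies X_{k,ℓ} = α X_{k−1,ℓ} + β X_{k,ℓ−1} + ε_{k,ℓ}. -/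
/-!
Write `w(i, j) = C(i+j, i) α^i β^j`. Since `C(i+j, i) |α|^i |β|^j ≤ (|α|+|β|)^(i+j)`, the weights
are absolutely summable over `ℕ × ℕ`, and the noise terms have norm one in `L²`, so the series
converges absolutely in `L²`. Pascal's rule gives `w(i, j) = α w(i-1, j) + β w(i, j-1)` for
`(i, j) ≠ (0, 0)`; shifting the summation index turns this into the recursion.
-/

open MeasureTheory Filter Topology Finset

lemma choose_mul_pow_mul_pow_le_add_pow {x y : ℝ} (hx : 0 ≤ x) (hy : 0 ≤ y) (i j : ℕ) :
    (i + j).choose i * x ^ i * y ^ j ≤ (x + y) ^ (i + j) := by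
  rw [add_pow]
  calc (i + j).choose i * x ^ i * y ^ j
      = x ^ i * y ^ (i + j - i) * (i + j).choose i := by rw [Nat.add_sub_cancel_left]; ring
    _ ≤ ∑ m ∈ range (i + j + 1), x ^ m * y ^ (i + j - m) * (i + j).choose m :=
      single_le_sum (f := fun m => x ^ m * y ^ (i + j - m) * ((i + j).choose m : ℝ))
        (fun m _ => by positivity) (mem_range.2 (by omega))

noncomputable def binomWeight (α β : ℝ) (ij : ℕ × ℕ) : ℝ :=
  (ij.1 + ij.2).choose ij.1 * α ^ ij.1 * β ^ ij.2

namespace binomWeight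

variable (α β : ℝ)

lemma zero_zero : binomWeight α β (0, 0) = 1 := by simp [binomWeight]

lemma succ_zero (i : ℕ) : binomWeight α β (i + 1, 0) = α * binomWeight α β (i, 0) := by
  simp [binomWeight, pow_succ]; ring

lemma zero_succ (j : ℕ) : binomWeight α β (0, j + 1) = β * binomWeight α β (0, j) := by
  simp [binomWeight, pow_succ]; ring

lemma succ_succ (i j : ℕ) : binomWeight α β (i + 1, j + 1) =
    α * binomWeight α β (i, j + 1) + β * binomWeight α β (i + 1, j) := by
  simp only [binomWeight]
  rw [show i + 1 + (j + 1) = i + (j + 1) + 1 by omega, Nat.choose_succ_succ,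
    show i + (j + 1) = i + 1 + j by omega]
  push_cast
  ring

lemma abs_eq (ij : ℕ × ℕ) : |binomWeight α β ij| = binomWeight |α| |β| ij := by
  simp [binomWeight, abs_mul, abs_pow]

variable {α β}

lemma summable_abs (h : |α| + |β| < 1) : Summable fun ij => |binomWeight α β ij| := by
  have hgeom : Summable fun n : ℕ => (|α| + |β|) ^ n :=
    summable_geometric_of_lt_one (by positivity) h
  refine (hgeom.mul_of_nonneg hgeom (fun _ => by positivity) (fun _ => by positivity))
    |>.of_nonneg_of_le (fun _ => abs_nonneg _) fun ⟨i, j⟩ => ?_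
  rw [abs_eq, ← pow_add]
  exact choose_mul_pow_mul_pow_le_add_pow (abs_nonneg α) (abs_nonneg β) i j

end binomWeight

section ShiftedSums

variable {E : Type*} [AddCommMonoid E] [TopologicalSpace E]

lemma HasSum.shift_fst {f : ℕ × ℕ → E} {a : E} (hf : HasSum f a) :
    HasSum (fun ij : ℕ × ℕ => if ij.1 = 0 then 0 else f (ij.1 - 1, ij.2)) a := by
  have hinj : Function.Injective fun ij : ℕ × ℕ => (ij.1 + 1, ij.2) := by
    intro _ _ h; simpa [Prod.ext_iff] using h
  refine (hinj.hasSum_iff fun ij hij => ?_).mp (by simpa [Function.comp_def] using hf)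
  rcases ij with ⟨_ | i, j⟩
  · simp
  · exact absurd ⟨(i, j), rfl⟩ hij

lemma HasSum.shift_snd {f : ℕ × ℕ → E} {a : E} (hf : HasSum f a) :
    HasSum (fun ij : ℕ × ℕ => if ij.2 = 0 then 0 else f (ij.1, ij.2 - 1)) a :=
  (Equiv.prodComm ℕ ℕ).hasSum_iff.mp
    ((Equiv.prodComm ℕ ℕ).hasSum_iff.mpr hf).shift_fst

lemma HasSum.tendsto_sum_range_succ_product {f : ℕ × ℕ → E} {a : E} (hf : HasSum f a) :
    Tendsto (fun N => ∑ ij ∈ range (N + 1) ×ˢ range (N + 1), f ij) atTop (𝓝 a) :=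
  hf.comp <| tendsto_finsetProd_atTop.comp <| tendsto_atTop_diagonal.comp <|
    tendsto_finset_range.comp (tendsto_add_atTop_nat 1)

end ShiftedSums

section MovingAverage

variable {E : Type*} [NormedAddCommGroup E] [NormedSpace ℝ E] (α β : ℝ) (e : ℤ × ℤ → E)

/-- `X_{k,ℓ}` of the paper, summed over `(k - i, ℓ - j)` instead of `(i, j)`. -/
noncomputable def binomMovingAverage (k ℓ : ℤ) : E :=
  ∑' ij : ℕ × ℕ, binomWeight α β ij • e (k - ij.1, ℓ - ij.2)

variable {α β e}

lemma binomWeight_smul_eq_pascal (k ℓ : ℤ) (ij : ℕ × ℕ) :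
    binomWeight α β ij • e (k - ij.1, ℓ - ij.2) =
      ((if ij.1 = 0 then 0 else
          α • (binomWeight α β (ij.1 - 1, ij.2) • e (k - 1 - ↑(ij.1 - 1), ℓ - ij.2))) +
        (if ij.2 = 0 then 0 else
          β • (binomWeight α β (ij.1, ij.2 - 1) • e (k - ij.1, ℓ - 1 - ↑(ij.2 - 1))))) +
        if ij = (0, 0) then e (k, ℓ) else 0 := by
  rcases ij with ⟨_ | i, _ | j⟩
  · simp [binomWeight.zero_zero]
  · simp [binomWeight.zero_succ, smul_smul, sub_sub, add_comm (1 : ℤ)]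
  · simp [binomWeight.succ_zero, smul_smul, sub_sub, add_comm (1 : ℤ)]
  · simp [binomWeight.succ_succ, smul_smul, add_smul, sub_sub, add_comm (1 : ℤ)]

lemma HasSum.binomWeight_smul_recursion {k ℓ : ℤ} {A B : E}
    (hA : HasSum (fun ij : ℕ × ℕ => binomWeight α β ij • e (k - 1 - ij.1, ℓ - ij.2)) A)
    (hB : HasSum (fun ij : ℕ × ℕ => binomWeight α β ij • e (k - ij.1, ℓ - 1 - ij.2)) B) :
    HasSum (fun ij : ℕ × ℕ => binomWeight α β ij • e (k - ij.1, ℓ - ij.2))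
      (α • A + β • B + e (k, ℓ)) := by
  have := ((hA.const_smul α).shift_fst.add (hB.const_smul β).shift_snd).add
    (hasSum_ite_eq ((0, 0) : ℕ × ℕ) (e (k, ℓ)))
  exact this.congr_fun (binomWeight_smul_eq_pascal k ℓ)

variable [CompleteSpace E]

lemma hasSum_binomMovingAverage (h : |α| + |β| < 1) {C : ℝ} (he : ∀ p, ‖e p‖ ≤ C) (k ℓ : ℤ) :
    HasSum (fun ij : ℕ × ℕ => binomWeight α β ij • e (k - ij.1, ℓ - ij.2))
      (binomMovingAverage α β e k ℓ) :=
  Summable.hasSum <| .of_norm_bounded ((binomWeight.summable_abs h).mul_right C) fun ij => by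
    rw [norm_smul, Real.norm_eq_abs]
    exact mul_le_mul_of_nonneg_left (he _) (abs_nonneg _)

lemma binomMovingAverage_eq (h : |α| + |β| < 1) {C : ℝ} (he : ∀ p, ‖e p‖ ≤ C) (k ℓ : ℤ) :
    binomMovingAverage α β e k ℓ = α • binomMovingAverage α β e (k - 1) ℓ +
      β • binomMovingAverage α β e k (ℓ - 1) + e (k, ℓ) :=
  (HasSum.binomWeight_smul_recursion (hasSum_binomMovingAverage h he (k - 1) ℓ)
    (hasSum_binomMovingAverage h he k (ℓ - 1))).tsum_eq

end MovingAverage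

section L2

variable {Ω : Type*} [MeasurableSpace Ω] {μ : Measure Ω}

lemma MeasureTheory.MemLp.norm_toLp_sq {f : Ω → ℝ} (hf : MemLp f 2 μ) :
    ‖hf.toLp f‖ ^ 2 = ∫ ω, f ω ^ 2 ∂μ := by
  rw [← real_inner_self_eq_norm_sq, L2.inner_def]
  refine integral_congr_ae ?_
  filter_upwards [hf.coeFn_toLp] with ω hω
  simp [hω, sq]

lemma MeasureTheory.Lp.coeFn_finsetSum_smul {𝕜 E : Type*} [NormedRing 𝕜] [NormedAddCommGroup E]
    [Module 𝕜 E] [IsBoundedSMul 𝕜 E] {p : ENNReal} {ι : Type*} (s : Finset ι) (c : ι → 𝕜)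
    (f : ι → Lp E p μ) :
    ⇑(∑ i ∈ s, c i • f i) =ᵐ[μ] fun ω => ∑ i ∈ s, c i • f i ω := by
  filter_upwards [Lp.coeFn_fun_finsetSum s fun i => c i • f i,
    (eventually_all_finset s).2 fun i _ => Lp.coeFn_smul (c i) (f i)] with ω hsum hsmul
  rw [hsum]
  exact sum_congr rfl fun i hi => hsmul i hi

lemma MeasureTheory.Lp.coeFn_smul_add_smul_add {p : ENNReal} (α β : ℝ)
    (a b c : Lp ℝ p μ) : ⇑(α • a + β • b + c) =ᵐ[μ] fun ω => α * a ω + β * b ω + c ω := by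
  filter_upwards [Lp.coeFn_add (α • a + β • b) c, Lp.coeFn_add (α • a) (β • b),
    Lp.coeFn_smul α a, Lp.coeFn_smul β b] with ω h1 h2 h3 h4
  simp only [h1, h2, h3, h4, Pi.add_apply, Pi.smul_apply, smul_eq_mul]

end L2

theorem stationary_solution_exists_general {Ω : Type*} [MeasurableSpace Ω] (μ : Measure Ω)
    (α β : ℝ) (h : |α| + |β| < 1)
    (ε : ℤ × ℤ → Ω → ℝ)
    (hmem : ∀ p, MemLp (ε p) 2 μ)
    (hvar : ∀ p, ∫ ω, (ε p ω) ^ 2 ∂μ = 1) :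
    ∃ X : ℤ → ℤ → Ω → ℝ,
      (∀ k ℓ : ℤ,
        Filter.Tendsto
          (fun N => eLpNorm (fun ω => X k ℓ ω -
            ∑ i ∈ Finset.range (N + 1), ∑ j ∈ Finset.range (N + 1),
              (((i + j).choose i : ℕ) : ℝ) * α ^ i * β ^ j *
                ε (k - i, ℓ - j) ω) 2 μ)
          Filter.atTop (nhds 0)) ∧
      (∀ k ℓ : ℤ, ∀ᵐ ω ∂μ,
        X k ℓ ω = α * X (k - 1) ℓ ω + β * X k (ℓ - 1) ω + ε (k, ℓ) ω) := by
  set e : ℤ × ℤ → Lp ℝ 2 μ := fun p => (hmem p).toLp (ε p)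
  have he : ∀ p, ‖e p‖ ≤ 1 := fun p => by
    have := (hmem p).norm_toLp_sq
    rw [hvar] at this
    nlinarith [norm_nonneg (e p)]
  have hε : ∀ᵐ ω ∂μ, ∀ p, e p ω = ε p ω := ae_all_iff.2 fun p => (hmem p).coeFn_toLp
  refine ⟨fun k ℓ => ⇑(binomMovingAverage α β e k ℓ), fun k ℓ => ?_, fun k ℓ => ?_⟩
  · have hlim := (hasSum_binomMovingAverage h he k ℓ).tendsto_sum_range_succ_product
    rw [Lp.tendsto_Lp_iff_tendsto_eLpNorm'] at hlim
    refine hlim.congr fun N => ?_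
    rw [eLpNorm_sub_comm]
    refine eLpNorm_congr_ae ?_
    filter_upwards [Lp.coeFn_finsetSum_smul (range (N + 1) ×ˢ range (N + 1)) (binomWeight α β)
      (fun ij => e (k - ij.1, ℓ - ij.2)), hε] with ω hsum hε
    rw [Pi.sub_apply, hsum, sum_product]
    simp only [hε, binomWeight, smul_eq_mul]
  · filter_upwards [Lp.coeFn_smul_add_smul_add α β (binomMovingAverage α β e (k - 1) ℓ)
      (binomMovingAverage α β e k (ℓ - 1)) (e (k, ℓ)), hε] with ω hω hε
    rw [binomMovingAverage_eq h he k ℓ, hω, hε]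

theorem stationary_solution_exists {Ω : Type*} [MeasurableSpace Ω] (μ : Measure Ω)
    [IsProbabilityMeasure μ] (α β : ℝ) (h : |α| + |β| < 1)
    (ε : ℤ × ℤ → Ω → ℝ)
    (hmeas : ∀ p, Measurable (ε p))
    (hindep : ProbabilityTheory.iIndepFun ε μ)
    (hident : ∀ p q, Measure.map (ε p) μ = Measure.map (ε q) μ)
    (hmem : ∀ p, MemLp (ε p) 2 μ)
    (hmean : ∀ p, ∫ ω, ε p ω ∂μ = 0)
    (hvar : ∀ p, ∫ ω, (ε p ω) ^ 2 ∂μ = 1) :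
    ∃ X : ℤ → ℤ → Ω → ℝ,
      (∀ k ℓ : ℤ,
        Filter.Tendsto
          (fun N => eLpNorm (fun ω => X k ℓ ω -
            ∑ i ∈ Finset.range (N + 1), ∑ j ∈ Finset.range (N + 1),
              (((i + j).choose i : ℕ) : ℝ) * α ^ i * β ^ j *
                ε (k - i, ℓ - j) ω) 2 μ)
          Filter.atTop (nhds 0)) ∧
      (∀ k ℓ : ℤ, ∀ᵐ ω ∂μ,
        X k ℓ ω = α * X (k - 1) ℓ ω + β * X k (ℓ - 1) ω + ε (k, ℓ) ω) :=
  stationary_solution_exists_general μ α β h ε hmem hvar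
end
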